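/- arXiv:math/0610567 — 6 statements merged into one kernel-verified Lean document; each statement's English description precedes it below -/
import Mathlib

section
/- The two birational maps s₁(a,b,c,d) = (c(a+d)/(b+c), d(b+c)/(a+d), a(b+c)/(a+d), b(a+d)/(b+c)) and s₂(a,b,c,d) = (b(a+d)/(b+c), a(b+c)/(a+d), d(b+c)/(a+d), c(a+d)/(b+c)) commute: s₁∘s₂ = s₂∘s₁ wherever both compositions are defined. -/
def s1 {F : Type*} [Field F] (p : F × F × F × F) : F × F × F × F :=
  let (a, b, c, d) := p
  (c * (a + d) / (b + c), d * (b + c) / (a + d),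
   a * (b + c) / (a + d), b * (a + d) / (b + c))

def s2 {F : Type*} [Field F] (p : F × F × F × F) : F × F × F × F :=
  let (a, b, c, d) := p
  (b * (a + d) / (b + c), a * (b + c) / (a + d),
   d * (b + c) / (a + d), c * (a + d) / (b + c))

/-- s₁ and s₂ commute wherever both compositions are defined. -/
theorem s1_s2_commute {F : Type*} [Field F] (a b c d : F)
    (had : a + d ≠ 0) (hbc : b + c ≠ 0)
    (h1 : (s2 (a, b, c, d)).1 + (s2 (a, b, c, d)).2.2.2 ≠ 0)
    (h2 : (s2 (a, b, c, d)).2.1 + (s2 (a, b, c, d)).2.2.1 ≠ 0)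
    (h3 : (s1 (a, b, c, d)).1 + (s1 (a, b, c, d)).2.2.2 ≠ 0)
    (h4 : (s1 (a, b, c, d)).2.1 + (s1 (a, b, c, d)).2.2.1 ≠ 0) :
    s1 (s2 (a, b, c, d)) = s2 (s1 (a, b, c, d)) := by

  have e1 : b*(a+d)/(b+c) + c*(a+d)/(b+c) = a+d := by (try field_simp); (try ring)
  have e2 : a*(b+c)/(a+d) + d*(b+c)/(a+d) = b+c := by (try field_simp); (try ring)
  have e3 : c*(a+d)/(b+c) + b*(a+d)/(b+c) = a+d := by (try field_simp); (try ring)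
  have e4 : d*(b+c)/(a+d) + a*(b+c)/(a+d) = b+c := by (try field_simp); (try ring)
  simp only [s1, s2, Prod.mk.injEq, e1, e2, e3, e4]
end

section
/- A quadruple (a,b,c,d) with a+d ≠ 0 and b+c ≠ 0 is a fixed point of s₁(a,b,c,d) = (c(a+d)/(b+c), d(b+c)/(a+d), a(b+c)/(a+d), b(a+d)/(b+c)) if and only if ab = cd, provided a,b,c,d are all nonzero. -/
/-- Fixed points of s₁ are exactly the quadruples with ab = cd. -/
theorem s1_fixed_iff {F : Type*} [Field F] (a b c d : F)
    (ha : a ≠ 0) (hb : b ≠ 0) (hc : c ≠ 0) (hd : d ≠ 0)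
    (had : a + d ≠ 0) (hbc : b + c ≠ 0) :
    s1 (a, b, c, d) = (a, b, c, d) ↔ a * b = c * d := by
  simp only [s1, Prod.mk.injEq, div_eq_iff hbc, div_eq_iff had]
  constructor
  · rintro ⟨h1, -, -, -⟩
    linear_combination -h1
  · intro h
    refine ⟨by linear_combination -h, by linear_combination -h, by linear_combination h,
      by linear_combination h⟩
end

section
/- The piecewise-linear map ẽ₁ⁿ(m₁,m₂,m₃) = (m₁ + max(δ-n,0) - max(δ,0), m₂, m₃ + max(δ,0) - max(δ,n)) with δ = m₁+m₃-m₂ satisfies ẽ₁^m ∘ ẽ₁ⁿ = ẽ₁^{m+n} for all integers m, n, i.e. defines a ℤ-action on ℤ³. -/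
def te1 (n : ℤ) (m : ℤ × ℤ × ℤ) : ℤ × ℤ × ℤ :=
  let δ := m.1 + m.2.2 - m.2.1
  (m.1 + max (δ - n) 0 - max δ 0, m.2.1, m.2.2 + max δ 0 - max δ n)

/-- The piecewise-linear maps ẽ₁ⁿ define a ℤ-action on ℤ³. -/
theorem te1_action : (∀ (m n : ℤ) (x : ℤ × ℤ × ℤ), te1 m (te1 n x) = te1 (m + n) x) ∧
    ∀ x : ℤ × ℤ × ℤ, te1 0 x = x := by
  constructor
  · intro m n x
    obtain ⟨a, b, c⟩ := x
    simp only [te1, Prod.mk.injEq]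
    exact ⟨by omega, trivial, by omega⟩
  · intro x
    obtain ⟨a, b, c⟩ := x
    simp only [te1, Prod.mk.injEq]
    exact ⟨by omega, trivial, by omega⟩
end

section
/- Let f̃(λ;m) = min(m₁, m₂-m₃, m₃, λ₂-λ₃-max(m₃,m₂-m₁), λ₁-λ₂-m₁) be the tropicalized function and let ẽ₂ⁿ(λ;m₁,m₂,m₃) = (λ; m₁, m₂-n, m₃) be the crystal operator. Then for (λ;m) with f̃(λ;m) ≥ 0, one has f̃(λ; m₁, m₂-n, m₃) ≥ 0 if and only if -(λ₂-λ₃+m₁-m₂) ≤ n ≤ m₂-m₃. -/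
def ftrop (l₁ l₂ l₃ m₁ m₂ m₃ : ℤ) : ℤ :=
  min (min (min (min m₁ (m₂ - m₃)) m₃) (l₂ - l₃ - max m₃ (m₂ - m₁)))
      (l₁ - l₂ - m₁)

/-- For (λ;m) in the cone, ẽ₂ⁿ(λ;m) stays in the cone iff -φ̃₂ ≤ n ≤ ε̃₂. -/
theorem te2_stays_in_cone (l₁ l₂ l₃ m₁ m₂ m₃ n : ℤ)
    (h : ftrop l₁ l₂ l₃ m₁ m₂ m₃ ≥ 0) :
    ftrop l₁ l₂ l₃ m₁ (m₂ - n) m₃ ≥ 0 ↔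
      -(l₂ - l₃ + m₁ - m₂) ≤ n ∧ n ≤ m₂ - m₃ := by
  simp only [ftrop, ge_iff_le, le_min_iff, min_le_iff, sub_nonneg, le_sub_iff_add_le,
    max_le_iff, le_max_iff] at *
  omega
end

section
/- The explicit GL₃ geometric crystal action e₁^d(t;c₁,c₂,c₃) = (t; c₁(c₂+c₁c₃)/(d·c₂+c₁c₃), c₂, c₃(c₂+d⁻¹c₁c₃)/(c₂+c₁c₃)) is a 𝔾ₘ-action: e₁^{d'}∘e₁^{d} = e₁^{d'd} and e₁^1 = id, wherever all denominators are nonzero. -/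
def e1GL3 {F : Type*} [Field F] (d : F) (c : F × F × F) : F × F × F :=
  let (c₁, c₂, c₃) := c
  (c₁ * (c₂ + c₁ * c₃) / (d * c₂ + c₁ * c₃), c₂,
   c₃ * (c₂ + d⁻¹ * c₁ * c₃) / (c₂ + c₁ * c₃))

/-!
`e₁^d` fixes `c₂` and divides the product `c₁ c₃` by `d`. Applying `e₁^{d'}` afterwards therefore
sees `c₂ + c₁ c₃ / d = (d c₂ + c₁ c₃) / d` where `e₁^{d'}` alone would see `c₂ + c₁ c₃`; this cancels
the factor `d c₂ + c₁ c₃` introduced by `e₁^d`, and what is left is the formula for `e₁^{d' d}`.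
-/

namespace e1GL3

variable {F : Type*} [Field F]

theorem snd_snd_eq_div {d : F} (c₁ c₂ c₃ : F) (hd : d ≠ 0) :
    (e1GL3 d (c₁, c₂, c₃)).2.2 = c₃ * ((d * c₂ + c₁ * c₃) / d) / (c₂ + c₁ * c₃) := by
  simp only [e1GL3]
  field_simp

theorem fst_mul_snd_snd {d c₁ c₂ c₃ : F} (hd : d ≠ 0) (h1 : c₂ + c₁ * c₃ ≠ 0)
    (h2 : d * c₂ + c₁ * c₃ ≠ 0) :
    (e1GL3 d (c₁, c₂, c₃)).1 * (e1GL3 d (c₁, c₂, c₃)).2.2 = c₁ * c₃ / d := by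
  rw [snd_snd_eq_div _ _ _ hd]
  calc c₁ * (c₂ + c₁ * c₃) / (d * c₂ + c₁ * c₃) * (c₃ * ((d * c₂ + c₁ * c₃) / d) / (c₂ + c₁ * c₃))
      = c₁ * c₃ / d * ((c₂ + c₁ * c₃) / (c₂ + c₁ * c₃))
          * ((d * c₂ + c₁ * c₃) / (d * c₂ + c₁ * c₃)) := by ring
    _ = c₁ * c₃ / d := by rw [div_self h1, div_self h2, mul_one, mul_one]

theorem apply_eq (d : F) (c : F × F × F) :
    e1GL3 d c = (c.1 * (c.2.1 + c.1 * c.2.2) / (d * c.2.1 + c.1 * c.2.2), c.2.1,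
      c.2.2 * (c.2.1 + d⁻¹ * (c.1 * c.2.2)) / (c.2.1 + c.1 * c.2.2)) := by
  simp only [e1GL3, mul_assoc]

theorem apply_apply {d d' c₁ c₂ c₃ : F} (hd : d ≠ 0) (h1 : c₂ + c₁ * c₃ ≠ 0)
    (h2 : d * c₂ + c₁ * c₃ ≠ 0) :
    e1GL3 d' (e1GL3 d (c₁, c₂, c₃)) = e1GL3 (d' * d) (c₁, c₂, c₃) := by
  rw [apply_eq d', fst_mul_snd_snd hd h1 h2, snd_snd_eq_div _ _ _ hd]
  have hB : c₂ + c₁ * c₃ / d = (d * c₂ + c₁ * c₃) / d := by field_simp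
  have hB' : d' * c₂ + c₁ * c₃ / d = (d' * d * c₂ + c₁ * c₃) / d := by field_simp
  simp only [e1GL3, Prod.mk.injEq, true_and]
  constructor
  · rw [hB, hB', mul_div_assoc, div_div_div_cancel_right₀ hd, div_mul_div_cancel₀ h2]
  · have hinv : d'⁻¹ * (c₁ * c₃ / d) = (d' * d)⁻¹ * c₁ * c₃ := by rw [mul_inv]; ring
    rw [hB, hinv]
    calc c₃ * ((d * c₂ + c₁ * c₃) / d) / (c₂ + c₁ * c₃) * (c₂ + (d' * d)⁻¹ * c₁ * c₃)
          / ((d * c₂ + c₁ * c₃) / d)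
        = c₃ * (c₂ + (d' * d)⁻¹ * c₁ * c₃) / (c₂ + c₁ * c₃)
            * ((d * c₂ + c₁ * c₃) / d / ((d * c₂ + c₁ * c₃) / d)) := by ring
      _ = c₃ * (c₂ + (d' * d)⁻¹ * c₁ * c₃) / (c₂ + c₁ * c₃) := by
        rw [div_self (div_ne_zero h2 hd), mul_one]

theorem one_apply (c : F × F × F) (h1 : c.2.1 + c.1 * c.2.2 ≠ 0) : e1GL3 1 c = c := by
  obtain ⟨c₁, c₂, c₃⟩ := c
  simp only [e1GL3, inv_one, one_mul, mul_div_assoc, div_self h1, mul_one]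

end e1GL3

theorem e1GL3_action_general {F : Type*} [Field F] (d d' c₁ c₂ c₃ : F)
    (hd : d ≠ 0)
    (h1 : c₂ + c₁ * c₃ ≠ 0) (h2 : d * c₂ + c₁ * c₃ ≠ 0) :
    e1GL3 d' (e1GL3 d (c₁, c₂, c₃)) = e1GL3 (d' * d) (c₁, c₂, c₃) ∧
    e1GL3 (1 : F) (c₁, c₂, c₃) = (c₁, c₂, c₃) :=
  ⟨e1GL3.apply_apply hd h1 h2, e1GL3.one_apply _ h1⟩

/-- The explicit GL₃ geometric crystal action e₁ is a 𝔾ₘ-action. -/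
theorem e1GL3_action {F : Type*} [Field F] (d d' c₁ c₂ c₃ : F)
    (hd : d ≠ 0) (hd' : d' ≠ 0)
    (h1 : c₂ + c₁ * c₃ ≠ 0) (h2 : d * c₂ + c₁ * c₃ ≠ 0)
    (h3 : (e1GL3 d (c₁, c₂, c₃)).2.1
        + (e1GL3 d (c₁, c₂, c₃)).1 * (e1GL3 d (c₁, c₂, c₃)).2.2 ≠ 0)
    (h4 : d' * (e1GL3 d (c₁, c₂, c₃)).2.1
        + (e1GL3 d (c₁, c₂, c₃)).1 * (e1GL3 d (c₁, c₂, c₃)).2.2 ≠ 0)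
    (h5 : d' * d * c₂ + c₁ * c₃ ≠ 0) :
    e1GL3 d' (e1GL3 d (c₁, c₂, c₃)) = e1GL3 (d' * d) (c₁, c₂, c₃) ∧
    e1GL3 (1 : F) (c₁, c₂, c₃) = (c₁, c₂, c₃) :=
  e1GL3_action_general d d' c₁ c₂ c₃ hd h1 h2
end

section
/- For the GL₃ example, the decoration f(t;c₁,c₂,c₃) = c₁ + c₂/c₃ + c₃ + (t₂/t₃)(c₁/c₂ + 1/c₃) + (t₁/t₂)(1/c₁) satisfies f(e₂^d(t;c)) = f(t;c) + (d-1)/φ₂ + (d⁻¹-1)/ε₂ where e₂^d(t;c₁,c₂,c₃) = (t;c₁,d⁻¹c₂,c₃), φ₂ = (t₃/t₂)(c₂/c₁) and ε₂ = c₃/c₂. -/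
def fGL3 {F : Type*} [Field F] (t₁ t₂ t₃ c₁ c₂ c₃ : F) : F :=
  c₁ + c₂ / c₃ + c₃ + (t₂ / t₃) * (c₁ / c₂ + 1 / c₃) + (t₁ / t₂) * (1 / c₁)

theorem fGL3_e2_general {F : Type*} [Field F] (t₁ t₂ t₃ c₁ c₂ c₃ d : F) :
    fGL3 t₁ t₂ t₃ c₁ (d⁻¹ * c₂) c₃ =
      fGL3 t₁ t₂ t₃ c₁ c₂ c₃ + (d - 1) / ((t₃ / t₂) * (c₂ / c₁))
        + (d⁻¹ - 1) / (c₃ / c₂) := by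
  -- Only `c₂ / c₃ = ε₂⁻¹` and `(t₂ / t₃) (c₁ / c₂) = φ₂⁻¹` involve `c₂`; they get scaled by `d⁻¹`
  -- and `d`. Once inverses are distributed this is a ring identity with the inverses as atoms.
  simp only [fGL3, div_eq_mul_inv, mul_inv, inv_inv]
  ring

/-- The GL₃ decoration satisfies the decorated-crystal identity for e₂. -/
theorem fGL3_e2 {F : Type*} [Field F] (t₁ t₂ t₃ c₁ c₂ c₃ d : F)
    (ht₁ : t₁ ≠ 0) (ht₂ : t₂ ≠ 0) (ht₃ : t₃ ≠ 0)
    (hc₁ : c₁ ≠ 0) (hc₂ : c₂ ≠ 0) (hc₃ : c₃ ≠ 0) (hd : d ≠ 0) :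
    fGL3 t₁ t₂ t₃ c₁ (d⁻¹ * c₂) c₃ =
      fGL3 t₁ t₂ t₃ c₁ c₂ c₃ + (d - 1) / ((t₃ / t₂) * (c₂ / c₁))
        + (d⁻¹ - 1) / (c₃ / c₂) :=
  fGL3_e2_general t₁ t₂ t₃ c₁ c₂ c₃ d
end
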